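/- arXiv:2504.04018 — 2 statements merged into one kernel-verified Lean document; each statement's English description precedes it below -/
import Mathlib

section
/- Consider a perfect binary segment tree over [1, N] with N = 2^L: the nodes at depth j are the ranges [(t-1)·N/2^j + 1, t·N/2^j] for t = 1, ..., 2^j, for j = 0, ..., L. For any query range [l_q, r_q] ⊆ [1, N], there exists a tree node [a, b] containing [l_q, r_q] with (r_q - l_q + 1)/(b - a + 1) ≥ 1/2, OR there exists a depth j and boundary point m (a midpoint of some node at depth j) such that [l_q, r_q] splits into [l_q, m] and [m+1, r_q], each of which is contained in a child node [a, b] at depth j+1 with elastic factor at least 1/2; i.e., at most two tree-node graphs suffice. -/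
/-!
Descend from the root to the smallest node containing the query. If it is a leaf, the query is
that leaf. Otherwise the query crosses the node's midpoint `m`, so `[l, m]` ends at the right end
of the left child and `[m + 1, r]` starts at the left end of the right child. A range touching an
end of a node is half-covered: either it fills at least half of the node, or it lies in the child
at that end and touches its end as well.
-/

/-- `IsSegNode L a b`: `[a, b]` is a node of the perfect binary segment tree over `[1, 2^L]`,
i.e. `[a,b] = [(t-1)·2^(L-j)+1, t·2^(L-j)]` for some depth `j ≤ L` and `1 ≤ t ≤ 2^j`. -/
def IsSegNode (L a b : ℕ) : Prop :=
  ∃ j t, j ≤ L ∧ 1 ≤ t ∧ t ≤ 2 ^ j ∧ a = (t - 1) * 2 ^ (L - j) + 1 ∧ b = t * 2 ^ (L - j)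

def HalfCovered (L x y : ℕ) : Prop :=
  ∃ a b, IsSegNode L a b ∧ a ≤ x ∧ y ≤ b ∧ b - a + 1 ≤ 2 * (y - x + 1)

section Block

variable {L k q : ℕ}

lemma le_and_succ_le_pow_sub_of_mul_pow_le (h : (q + 1) * 2 ^ k ≤ 2 ^ L) :
    k ≤ L ∧ q + 1 ≤ 2 ^ (L - k) := by
  have hkL : k ≤ L :=
    (Nat.pow_le_pow_iff_right one_lt_two).mp ((Nat.le_mul_of_pos_left _ q.succ_pos).trans h)
  refine ⟨hkL, Nat.le_of_mul_le_mul_right ?_ (Nat.two_pow_pos k)⟩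
  rwa [← pow_add, Nat.sub_add_cancel hkL]

lemma isSegNode_block (h : (q + 1) * 2 ^ k ≤ 2 ^ L) :
    IsSegNode L (q * 2 ^ k + 1) ((q + 1) * 2 ^ k) := by
  obtain ⟨hkL, hq⟩ := le_and_succ_le_pow_sub_of_mul_pow_le h
  have hdepth : L - (L - k) = k := Nat.sub_sub_self hkL
  exact ⟨L - k, q + 1, Nat.sub_le L k, q.succ_pos, hq, by rw [hdepth, Nat.add_sub_cancel],
    by rw [hdepth]⟩

lemma block_children_endpoints (q k : ℕ) :
    2 * q * 2 ^ k = q * 2 ^ (k + 1) ∧ (2 * q + 1) * 2 ^ k = q * 2 ^ (k + 1) + 2 ^ k ∧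
      (2 * q + 1 + 1) * 2 ^ k = (q + 1) * 2 ^ (k + 1) ∧
      (q + 1) * 2 ^ (k + 1) = q * 2 ^ (k + 1) + 2 ^ (k + 1) ∧ 2 ^ (k + 1) = 2 * 2 ^ k := by
  refine ⟨?_, ?_, ?_, ?_, ?_⟩ <;> ring

lemma halfCovered_of_touches_end (h : (q + 1) * 2 ^ k ≤ 2 ^ L) {x y : ℕ}
    (hx : q * 2 ^ k < x) (hxy : x ≤ y) (hy : y ≤ (q + 1) * 2 ^ k)
    (hend : x = q * 2 ^ k + 1 ∨ y = (q + 1) * 2 ^ k) : HalfCovered L x y := by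
  induction k generalizing q with
  | zero => exact ⟨_, _, isSegNode_block h, by omega, by omega, by omega⟩
  | succ k ih =>
    by_cases hhalf : 2 ^ (k + 1) ≤ 2 * (y - x + 1)
    · exact ⟨_, _, isSegNode_block h, by omega, hy, by rw [add_one_mul]; omega⟩
    have := block_children_endpoints q k
    rcases hend with rfl | rfl
    · exact ih (q := 2 * q) (by omega) (by omega) (by omega) (.inl (by omega))
    · exact ih (q := 2 * q + 1) (by omega) (by omega) (by omega) (.inr (by omega))

end Block

lemma halfCovered_or_splits_of_le_block {L l r : ℕ} (hlr : l ≤ r) (k q : ℕ)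
    (h : (q + 1) * 2 ^ k ≤ 2 ^ L) (hl : q * 2 ^ k < l) (hr : r ≤ (q + 1) * 2 ^ k) :
    HalfCovered L l r ∨
    ∃ j t m, j < L ∧ 1 ≤ t ∧ t ≤ 2 ^ j ∧
      m = (t - 1) * 2 ^ (L - j) + 2 ^ (L - j - 1) ∧ l ≤ m ∧ m < r ∧
      HalfCovered L l m ∧ HalfCovered L (m + 1) r := by
  induction k generalizing q with
  | zero => exact .inl (halfCovered_of_touches_end h hl hlr hr (.inl (by omega)))
  | succ k ih =>
    have := block_children_endpoints q k
    by_cases hrm : r ≤ (2 * q + 1) * 2 ^ k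
    · exact ih (2 * q) (by omega) (by omega) hrm
    by_cases hml : (2 * q + 1) * 2 ^ k < l
    · exact ih (2 * q + 1) (by omega) hml (by omega)
    obtain ⟨hkL, hq⟩ := le_and_succ_le_pow_sub_of_mul_pow_le h
    have hdepth : L - (L - (k + 1)) = k + 1 := Nat.sub_sub_self hkL
    refine .inr ⟨L - (k + 1), q + 1, (2 * q + 1) * 2 ^ k, by omega, q.succ_pos, hq,
      by rw [hdepth, Nat.add_sub_cancel, Nat.add_sub_cancel]; ring, by omega, by omega, ?_, ?_⟩
    · exact halfCovered_of_touches_end (q := 2 * q) (by omega) (by omega) (by omega) le_rfl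
        (.inr rfl)
    · exact halfCovered_of_touches_end (q := 2 * q + 1) (by omega) (by omega) (by omega)
        (by omega) (.inl rfl)

/-- Two-cover lemma for the binary segment tree over `[1, N]`, `N = 2^L`: every query range
`[l, r] ⊆ [1, N]` either is contained in a tree node `[a,b]` with elastic factor
`(r-l+1)/(b-a+1) ≥ 1/2`, or it splits at the midpoint `m` of some node at depth `j < L` into
`[l, m]` and `[m+1, r]`, each contained in a tree node with elastic factor `≥ 1/2`;
i.e. at most two tree-node graphs suffice. -/
theorem segment_tree_two_cover (L l r : ℕ) (hl : 1 ≤ l) (hlr : l ≤ r) (hr : r ≤ 2 ^ L) :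
    (∃ a b, IsSegNode L a b ∧ a ≤ l ∧ r ≤ b ∧ b - a + 1 ≤ 2 * (r - l + 1)) ∨
    (∃ j t m, j < L ∧ 1 ≤ t ∧ t ≤ 2 ^ j ∧
      m = (t - 1) * 2 ^ (L - j) + 2 ^ (L - j - 1) ∧ l ≤ m ∧ m < r ∧
      (∃ a b, IsSegNode L a b ∧ a ≤ l ∧ m ≤ b ∧ b - a + 1 ≤ 2 * (m - l + 1)) ∧
      (∃ a b, IsSegNode L a b ∧ a ≤ m + 1 ∧ r ≤ b ∧ b - a + 1 ≤ 2 * (r - m))) := by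
  rcases halfCovered_or_splits_of_le_block (L := L) hlr L 0 (by simp) (by simpa) (by simpa) with
    hcover | ⟨j, t, m, hj, ht, htj, hm, hlm, hmr, hleft, a, b, hnode, ha, hb, hfactor⟩
  · exact .inl hcover
  · refine .inr ⟨j, t, m, hj, ht, htj, hm, hlm, hmr, hleft, a, b, hnode, ha, hb, ?_⟩
    omega
end

section
/- Fanout-f dichotomy: in the fanout-f segment tree over [1, N] = [1, f^L], any query range [l_q, r_q] either (a) has elastic factor ≥ 1/f relative to its deepest containing tree node, or (b) intersects exactly two children of its deepest containing node, splitting into a suffix of the left child and a prefix of the right child. -/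
/-!
Let `w = f^(L-j-1)` be the length of the children of the deepest node `[a, a + f w - 1]`.
If `l` and `r` lay in the same child, that child would be a deeper node containing the query.
If they lie in adjacent children we are in case (b); otherwise the query covers a whole child,
so `r - l + 1 ≥ w = f^(L-j) / f`.
-/

namespace FanoutTree

theorem div_eq_or_div_eq_succ_or_lt_sub {w x y : ℕ} (hxy : x ≤ y) :
    x / w = y / w ∨ y / w = x / w + 1 ∨ w < y - x := by
  rcases Nat.eq_zero_or_pos w with rfl | hw
  · simp
  have hle : x / w ≤ y / w := Nat.div_le_div_right hxy
  refine or_iff_not_imp_left.2 fun hne => or_iff_not_imp_left.2 fun hne' => ?_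
  have hfar : (x / w + 2) * w ≤ y / w * w := Nat.mul_le_mul_right w (by omega)
  have hx := Nat.lt_div_mul_add (a := x) hw
  have hy := Nat.div_mul_le_self y w
  rw [add_mul] at hfar
  omega

/-- Children of the block `[a, a + f w - 1]` are the blocks of length `w`, numbered from `0` in
the first alternative and from `1` in the second. -/
theorem within_child_or_adjacent_children_or_lt_sub {a f w l r : ℕ} (hw : 0 < w)
    (hal : a ≤ l) (hlr : l ≤ r) (hr : r < a + f * w) :
    (∃ c < f, a + c * w ≤ l ∧ r < a + c * w + w) ∨
    (∃ s, 1 ≤ s ∧ s < f ∧ a + (s - 1) * w ≤ l ∧ l ≤ a + s * w - 1 ∧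
      a + s * w ≤ r ∧ r ≤ a + (s + 1) * w - 1) ∨
    w < r - l := by
  obtain ⟨x, rfl⟩ := Nat.exists_eq_add_of_le hal
  obtain ⟨y, rfl⟩ := Nat.exists_eq_add_of_le (hal.trans hlr)
  have hcases := div_eq_or_div_eq_succ_or_lt_sub (w := w) (by omega : x ≤ y)
  have hyf : y / w < f := (Nat.div_lt_iff_lt_mul hw).2 (by omega)
  have hx := Nat.lt_div_mul_add (a := x) hw
  have hx' := Nat.div_mul_le_self x w
  have hy := Nat.lt_div_mul_add (a := y) hw
  have hy' := Nat.div_mul_le_self y w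
  generalize x / w = q at *
  generalize y / w = p at *
  rcases hcases with rfl | rfl | hlong
  · exact .inl ⟨q, hyf, by omega, by omega⟩
  · rw [add_mul, one_mul] at hy hy'
    refine .inr (.inl ⟨q + 1, by omega, hyf, ?_, ?_, ?_, ?_⟩) <;>
      simp only [Nat.add_sub_cancel, add_mul, one_mul] <;> omega
  · exact .inr (.inr (by omega))

theorem child_index_le_pow_succ {f j t c : ℕ} (ht : t ≤ f ^ j) (hc : c < f) :
    (t - 1) * f + c + 1 ≤ f ^ (j + 1) :=
  calc (t - 1) * f + c + 1 ≤ (t - 1) * f + f := by omega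
    _ = (t - 1 + 1) * f := by rw [add_mul, one_mul]
    _ ≤ f ^ j * f := Nat.mul_le_mul_right f (by have := Nat.one_le_pow j f (by omega); omega)
    _ = f ^ (j + 1) := (pow_succ f j).symm

end FanoutTree

open FanoutTree

/-- Fanout-`f` dichotomy: in the fanout-`f` segment tree over `[1, f^L]`, let `[a, b]` be the
deepest tree node containing the query range `[l, r]` (depth `j`, block `t`, child length
`w = f^(L-j-1)`).  Then either the elastic factor of the query relative to this node is at
least `1/f` (`f·(r-l+1) ≥ f^(L-j)`), or the query intersects exactly two consecutive children
`s` and `s+1`, splitting into a suffix of the left child and a prefix of the right child. -/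
theorem fanout_dichotomy (L f j t l r a w : ℕ) (hf : 2 ≤ f)
    (hjL : j ≤ L) (ht1 : 1 ≤ t) (ht2 : t ≤ f ^ j)
    (ha : a = (t - 1) * f ^ (L - j) + 1) (hw : w = f ^ (L - j - 1))
    (hal : a ≤ l) (hlr : l ≤ r) (hrb : r ≤ t * f ^ (L - j))
    (hdeep : ∀ j' t', 1 ≤ t' → t' ≤ f ^ j' → j' ≤ L →
      (t' - 1) * f ^ (L - j') + 1 ≤ l → r ≤ t' * f ^ (L - j') → j' ≤ j) :
    f ^ (L - j) ≤ f * (r - l + 1) ∨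
    (j < L ∧ ∃ s, 1 ≤ s ∧ s < f ∧
      a + (s - 1) * w ≤ l ∧ l ≤ a + s * w - 1 ∧
      a + s * w ≤ r ∧ r ≤ a + (s + 1) * w - 1) := by
  obtain hjL | rfl := hjL.lt_or_eq
  swap
  · left
    rw [Nat.sub_self, pow_zero]
    exact Nat.mul_pos (by omega) (Nat.succ_pos _)
  have hw0 : 0 < w := hw ▸ pow_pos (by omega) _
  have hnode : f ^ (L - j) = f * w := by rw [hw, ← pow_succ']; congr 1; omega
  have hchild : f ^ (L - (j + 1)) = w := by rw [hw, Nat.sub_sub]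
  have hend : t * (f * w) = (t - 1) * (f * w) + f * w := by
    rw [← Nat.succ_mul, Nat.succ_eq_add_one, Nat.sub_add_cancel ht1]
  rw [hnode] at ha hrb ⊢
  rcases within_child_or_adjacent_children_or_lt_sub hw0 hal hlr (by omega : r < a + f * w) with
    ⟨c, hc, hlc, hrc⟩ | hadj | hlong
  · have hstart : ((t - 1) * f + c) * w = (t - 1) * (f * w) + c * w := by ring
    have := hdeep (j + 1) ((t - 1) * f + c + 1) (by omega) (child_index_le_pow_succ ht2 hc) hjL
      (by rw [hchild, Nat.add_sub_cancel, hstart]; omega)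
      (by rw [hchild, add_mul, hstart]; omega)
    omega
  · exact .inr ⟨hjL, hadj⟩
  · exact .inl (Nat.mul_le_mul_left f (by omega : w ≤ r - l + 1))
end
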